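/- arXiv:2011.04334 — 5 statements merged into one kernel-verified Lean document; each statement's English description precedes it below -/
import Mathlib

section
/- Let V be a real vector space, B : V × V → ℝ a bilinear form with B(v,v) ≥ 0 for all v ∈ V, and ℓ : V → ℝ a linear functional. Suppose u, ũ ∈ V satisfy B(u,f) = ℓ(f) and B(f,ũ) = ℓ(f) for all f ∈ V, and that ℓ(u) > 0. Then, with the infimum and supremum taken in the extended real numbers, ⨅_{f ∈ V, ℓ(f)=1} ⨆_{g ∈ V, ℓ(g)=0} B(f+g, f−g) = 1/ℓ(u). -/
/-! Write `α = ℓ u`. Since `B(u, ·) = ℓ = B(·, ũ)`, the cross terms cancel in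
`B(α⁻¹u + a, α⁻¹ũ - a) = α⁻¹ - B(a, a) ≤ α⁻¹`; taking `f = (2α)⁻¹(u + ũ)` and
`a = g - (2α)⁻¹(u - ũ)` shows that the inner supremum at this `f` is at most `α⁻¹`.
Conversely, for any `f` with `ℓ f = 1`, the choice `g = f - α⁻¹ũ` gives
`B(f + g, f - g) = α⁻¹ ℓ(2f - α⁻¹ũ) = α⁻¹`, using `ℓ ũ = B(u, ũ) = ℓ u`. -/

theorem iInf_iSup_eq_of_forall_exists {ι κ α : Type*} [CompleteLattice α] {φ : ι → κ → α}
    {c : α} (hupper : ∃ i, ∀ j, φ i j ≤ c) (hlower : ∀ i, ∃ j, c ≤ φ i j) :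
    ⨅ i, ⨆ j, φ i j = c := by
  obtain ⟨i₀, hi₀⟩ := hupper
  refine le_antisymm (iInf_le_of_le i₀ (iSup_le hi₀)) (le_iInf fun i => ?_)
  obtain ⟨j, hj⟩ := hlower i
  exact le_iSup_of_le j hj

section Representers

variable {V : Type*} [AddCommGroup V] [Module ℝ V] {B : V →ₗ[ℝ] V →ₗ[ℝ] ℝ} {ℓ : V →ₗ[ℝ] ℝ}
  {u ut : V}

theorem apply_eq_apply_of_represents (hu : ∀ f, B u f = ℓ f) (hut : ∀ f, B f ut = ℓ f) :
    ℓ ut = ℓ u := by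
  rw [← hu ut, hut u]

theorem apply_inv_smul_add_inv_smul_sub (hu : ∀ f, B u f = ℓ f) (hut : ∀ f, B f ut = ℓ f)
    (hα : ℓ u ≠ 0) (a : V) :
    B ((ℓ u)⁻¹ • u + a) ((ℓ u)⁻¹ • ut - a) = (ℓ u)⁻¹ - B a a := by
  simp only [map_add, map_sub, map_smul, LinearMap.add_apply, LinearMap.smul_apply,
    smul_eq_mul, hu, hut, apply_eq_apply_of_represents hu hut]
  field_simp
  ring

theorem exists_forall_apply_add_sub_le_inv (hB : ∀ v, 0 ≤ B v v) (hu : ∀ f, B u f = ℓ f)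
    (hut : ∀ f, B f ut = ℓ f) (hα : ℓ u ≠ 0) :
    ∃ f, ℓ f = 1 ∧ ∀ g, B (f + g) (f - g) ≤ (ℓ u)⁻¹ := by
  refine ⟨(2 * ℓ u)⁻¹ • (u + ut), ?_, fun g => ?_⟩
  · rw [map_smul, map_add, apply_eq_apply_of_represents hu hut, smul_eq_mul]
    field_simp
    ring
  · set d : V := (2 * ℓ u)⁻¹ • (u - ut)
    have hplus : (2 * ℓ u)⁻¹ • (u + ut) + g = (ℓ u)⁻¹ • u + (g - d) := by
      simp only [d, mul_inv]
      module
    have hminus : (2 * ℓ u)⁻¹ • (u + ut) - g = (ℓ u)⁻¹ • ut - (g - d) := by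
      simp only [d, mul_inv]
      module
    rw [hplus, hminus, apply_inv_smul_add_inv_smul_sub hu hut hα]
    linarith [hB (g - d)]

theorem exists_apply_add_sub_eq_inv (hut : ∀ f, B f ut = ℓ f) (hβ : ℓ ut ≠ 0) {f : V}
    (hf : ℓ f = 1) : ∃ g, ℓ g = 0 ∧ B (f + g) (f - g) = (ℓ ut)⁻¹ := by
  refine ⟨f - (ℓ ut)⁻¹ • ut, ?_, ?_⟩
  · rw [map_sub, map_smul, hf, smul_eq_mul, inv_mul_cancel₀ hβ, sub_self]
  · rw [sub_sub_cancel, map_smul, smul_eq_mul, hut, map_add, map_sub, map_smul, hf,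
      smul_eq_mul, inv_mul_cancel₀ hβ]
    ring

end Representers

/-- Abstract core of Theorem 2.2: the saddle-point variational formula
`⨅_{ℓ f = 1} ⨆_{ℓ g = 0} B(f+g, f-g) = 1/ℓ(u)` for a nonnegative bilinear form `B`,
where `u`, `ut` are the potential and dual potential: `B(u,·) = ℓ = B(·,ut)`. -/
theorem stmt0 {V : Type*} [AddCommGroup V] [Module ℝ V]
    (B : V →ₗ[ℝ] V →ₗ[ℝ] ℝ) (hBnonneg : ∀ v : V, 0 ≤ B v v)
    (ℓ : V →ₗ[ℝ] ℝ) (u ut : V)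
    (hu : ∀ f : V, B u f = ℓ f) (hut : ∀ f : V, B f ut = ℓ f)
    (hpos : 0 < ℓ u) :
    (⨅ f : {f : V // ℓ f = 1}, ⨆ g : {g : V // ℓ g = 0},
        ((B (f.1 + g.1) (f.1 - g.1) : ℝ) : EReal))
      = ((1 / ℓ u : ℝ) : EReal) := by
  have hα : ℓ u ≠ 0 := hpos.ne'
  have hℓut : ℓ ut = ℓ u := apply_eq_apply_of_represents hu hut
  rw [one_div]
  apply iInf_iSup_eq_of_forall_exists
  · obtain ⟨w, hw, hle⟩ := exists_forall_apply_add_sub_le_inv hBnonneg hu hut hα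
    exact ⟨⟨w, hw⟩, fun g => EReal.coe_le_coe_iff.mpr (hle g)⟩
  · intro f
    obtain ⟨g, hg, hval⟩ := exists_apply_add_sub_eq_inv hut (hℓut ▸ hα) f.2
    exact ⟨⟨g, hg⟩, by rw [hval, hℓut]⟩
end

section
/- Let V be a real vector space, B : V × V → ℝ a bilinear form with B(v,v) ≥ 0 for all v ∈ V, and ℓ : V → ℝ a linear functional. Suppose u, ũ ∈ V satisfy B(u,f) = ℓ(f) and B(f,ũ) = ℓ(f) for all f ∈ V, and ℓ(u) > 0. Set w̄ := (u + ũ)/(2ℓ(u)). Then ℓ(w̄) = 1, and for every g ∈ V with ℓ(g) = 0 one has B(w̄ + g, w̄ − g) ≤ 1/ℓ(u). -/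
/-- Upper-bound half ((2.9)-(2.10)) of the proof of Theorem 2.2: with
`w := (u + ut)/(2 ℓ(u))`, one has `ℓ(w) = 1` and `B(w+g, w-g) ≤ 1/ℓ(u)`
for every `g` with `ℓ(g) = 0`. -/
theorem stmt3 {V : Type*} [AddCommGroup V] [Module ℝ V]
    (B : V →ₗ[ℝ] V →ₗ[ℝ] ℝ) (hBnonneg : ∀ v : V, 0 ≤ B v v)
    (ℓ : V →ₗ[ℝ] ℝ) (u ut : V)
    (hu : ∀ f : V, B u f = ℓ f) (hut : ∀ f : V, B f ut = ℓ f)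
    (hpos : 0 < ℓ u) :
    ℓ ((2 * ℓ u)⁻¹ • (u + ut)) = 1 ∧
    ∀ g : V, ℓ g = 0 →
      B ((2 * ℓ u)⁻¹ • (u + ut) + g) ((2 * ℓ u)⁻¹ • (u + ut) - g) ≤ 1 / ℓ u := by
  have hne : ℓ u ≠ 0 := ne_of_gt hpos
  have hℓut : ℓ ut = ℓ u := by rw [← hu ut, hut u]
  constructor
  · simp only [map_smul, map_add, smul_eq_mul, hℓut]
    field_simp
    ring
  · intro g hg
    have key := hBnonneg ((2 * ℓ u)⁻¹ • u - (2 * ℓ u)⁻¹ • ut - g)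
    have huu : B u u = ℓ u := hu u
    have huut : B u ut = ℓ u := by rw [hu ut, hℓut]
    have hug : B u g = 0 := by rw [hu g, hg]
    have hutut : B ut ut = ℓ u := by rw [hut ut, hℓut]
    have hgut : B g ut = 0 := by rw [hut g, hg]
    simp only [map_add, map_sub, map_smul, LinearMap.add_apply, LinearMap.sub_apply,
      LinearMap.smul_apply, smul_eq_mul, huu, huut, hug, hutut, hgut] at key ⊢
    have h4 : 4 * ((2 * ℓ u)⁻¹ * ((2 * ℓ u)⁻¹ * ℓ u)) = 1 / ℓ u := by
      field_simp; ring
    nlinarith [key, h4]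
end

section
/- Let V be a real vector space, B : V × V → ℝ a bilinear form with B(v,v) ≥ 0 for all v ∈ V, and ℓ : V → ℝ a linear functional. Suppose u, ũ ∈ V satisfy B(u,f) = ℓ(f) and B(f,ũ) = ℓ(f) for all f ∈ V, and ℓ(u) > 0. Set ŵ := (u − ũ)/(2ℓ(u)). Then ℓ(ŵ) = 0, and for every f ∈ V with ℓ(f) = 1 one has B(f + ŵ, f − ŵ) ≥ 1/ℓ(u). -/
/-! Put `g := f - (u + ũ) / (2 ℓ(u))`, so that `ℓ(g) = 0` when `ℓ(f) = 1`. Then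
`f + ŵ = g + u / ℓ(u)` and `f - ŵ = g + ũ / ℓ(u)`, and expanding with `B(u, ·) = ℓ = B(·, ũ)`
gives `B(f + ŵ, f - ŵ) = B(g, g) + 1 / ℓ(u) ≥ 1 / ℓ(u)`. -/

section Representers

variable {V : Type*} [AddCommGroup V] [Module ℝ V] {B : V →ₗ[ℝ] V →ₗ[ℝ] ℝ} {ℓ : V →ₗ[ℝ] ℝ}
  {u ut : V}

lemma map_dualRepresenter_eq (hu : ∀ f : V, B u f = ℓ f) (hut : ∀ f : V, B f ut = ℓ f) :
    ℓ ut = ℓ u := by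
  rw [← hu ut, hut u]

lemma apply_add_smul_add_smul_of_representers (hu : ∀ f : V, B u f = ℓ f)
    (hut : ∀ f : V, B f ut = ℓ f) (g : V) (s t : ℝ) :
    B (g + s • u) (g + t • ut) = B g g + (s + t) * ℓ g + s * t * ℓ u := by
  simp only [map_add, map_smul, LinearMap.add_apply, LinearMap.smul_apply, smul_eq_mul, hu, hut,
    map_dualRepresenter_eq hu hut]
  ring

end Representers

/-- Lower-bound half (inequality (2.11)) of the proof of Theorem 2.2: with
`w := (u - ut)/(2 ℓ(u))`, one has `ℓ(w) = 0` and `B(f+w, f-w) ≥ 1/ℓ(u)`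
for every `f` with `ℓ(f) = 1`. -/
theorem stmt4 {V : Type*} [AddCommGroup V] [Module ℝ V]
    (B : V →ₗ[ℝ] V →ₗ[ℝ] ℝ) (hBnonneg : ∀ v : V, 0 ≤ B v v)
    (ℓ : V →ₗ[ℝ] ℝ) (u ut : V)
    (hu : ∀ f : V, B u f = ℓ f) (hut : ∀ f : V, B f ut = ℓ f)
    (hpos : 0 < ℓ u) :
    ℓ ((2 * ℓ u)⁻¹ • (u - ut)) = 0 ∧
    ∀ f : V, ℓ f = 1 →
      1 / ℓ u ≤ B (f + (2 * ℓ u)⁻¹ • (u - ut)) (f - (2 * ℓ u)⁻¹ • (u - ut)) := by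
  have hℓut := map_dualRepresenter_eq hu hut
  refine ⟨by simp [hℓut], fun f hf => ?_⟩
  set g := f - (2 * ℓ u)⁻¹ • (u + ut)
  have hg : ℓ g = 0 := by
    simp only [g, map_sub, map_smul, map_add, hℓut, hf, smul_eq_mul]
    field_simp
    ring
  have hplus : f + (2 * ℓ u)⁻¹ • (u - ut) = g + (ℓ u)⁻¹ • u := by module
  have hminus : f - (2 * ℓ u)⁻¹ • (u - ut) = g + (ℓ u)⁻¹ • ut := by module
  calc 1 / ℓ u ≤ B g g + 1 / ℓ u := le_add_of_nonneg_left (hBnonneg g)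
    _ = B (g + (ℓ u)⁻¹ • u) (g + (ℓ u)⁻¹ • ut) := by
      rw [apply_add_smul_add_smul_of_representers hu hut, hg]
      field_simp
      ring
    _ = _ := by rw [hplus, hminus]
end

section
/- Let r ∈ ℝ and let C : [r,∞) → ℝ be continuous. Define φ(t) = ∫_r^t exp(−C(l)) dl, assume ∫_t^∞ exp(C(s)) ds < ∞ for every t ≥ r, and set δ := sup_{t ≥ r} φ(t)·∫_t^∞ exp(C(s)) ds, assumed finite. Then for every l > r, the integral ∫_l^∞ exp(C(s))·√(φ(s)) ds is finite and satisfies ∫_l^∞ exp(C(s))·√(φ(s)) ds ≤ 2δ/√(φ(l)). -/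
open MeasureTheory Set Filter Topology

/-!
Let `G(t) = ∫_t^∞ exp(C)`. Since `φ G ≤ δ`, the integrand satisfies
`exp(C) √φ ≤ √δ · exp(C) / √G = √δ · (-2 √G)'`, so its integral over `(l, ∞)` is at most
`2 √δ √(G l)`, and `G l ≤ δ / φ l` once more gives `2 δ / √(φ l)`.
-/

theorem hasDerivAt_integral_Ioi {f : ℝ → ℝ} {a x : ℝ} (hf : IntegrableOn f (Ioi a))
    (hax : a < x) (hfx : ContinuousAt f x) :
    HasDerivAt (fun t => ∫ s in Ioi t, f s) (-f x) x := by
  have hprim : HasDerivAt (fun t => ∫ s in a..t, f s) (f x) x :=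
    intervalIntegral.integral_hasDerivAt_right
      ((intervalIntegrable_iff_integrableOn_Ioc_of_le hax.le).2 (hf.mono_set Ioc_subset_Ioi_self))
      ⟨Ioi a, Ioi_mem_nhds hax, hf.aestronglyMeasurable⟩ hfx
  refine (hprim.const_sub (∫ s in Ioi a, f s)).congr_of_eventuallyEq ?_
  filter_upwards [Ioi_mem_nhds hax] with t (ht : a < t)
  rw [← intervalIntegral.integral_Ioi_sub_Ioi hf ht.le, sub_sub_cancel]

theorem ContinuousOn.continuousOn_primitive_Ici {f : ℝ → ℝ} {r : ℝ}
    (hf : ContinuousOn f (Ici r)) :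
    ContinuousOn (fun s => ∫ u in r..s, f u) (Ici r) := by
  intro x (hx : r ≤ x)
  have hrx : r ≤ x + 1 := by linarith
  have hIcc := intervalIntegral.continuousOn_primitive_interval (μ := volume)
    ((hf.mono (uIcc_of_le hrx ▸ Icc_subset_Ici_self)).integrableOn_compact isCompact_uIcc)
  rw [uIcc_of_le hrx] at hIcc
  refine (hIcc x ⟨hx, by linarith⟩).mono_of_mem_nhdsWithin ?_
  filter_upwards [self_mem_nhdsWithin, mem_nhdsWithin_of_mem_nhds (Iio_mem_nhds (lt_add_one x))]
    with s hs hs' using ⟨hs, hs'.le⟩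

theorem Real.sqrt_le_sqrt_div_sqrt_of_mul_le {a b c : ℝ} (hb : 0 < b) (h : a * b ≤ c) :
    √a ≤ √c / √b := by
  rw [← Real.sqrt_div' c hb.le]
  exact Real.sqrt_le_sqrt ((le_div_iff₀ hb).2 h)

theorem Real.mul_sqrt_le_sqrt_mul_div_sqrt {a b c d : ℝ} (ha : 0 ≤ a) (hb : 0 < b)
    (h : c * b ≤ d) : a * √c ≤ √d * (a / √b) := by
  rw [mul_div_left_comm]
  exact mul_le_mul_of_nonneg_left (Real.sqrt_le_sqrt_div_sqrt_of_mul_le hb h) ha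

section SqrtTail

variable {f G φ : ℝ → ℝ} {l δ : ℝ}

theorem hasDerivAt_neg_two_mul_sqrt {x : ℝ} (hG : HasDerivAt G (-f x) x) (hpos : 0 < G x) :
    HasDerivAt (fun t => -2 * √(G t)) (f x / √(G x)) x := by
  refine ((hG.sqrt hpos.ne').const_mul (-2)).congr_deriv ?_
  field_simp

theorem tendsto_neg_two_mul_sqrt (hlim : Tendsto G atTop (𝓝 0)) :
    Tendsto (fun t => -2 * √(G t)) atTop (𝓝 0) := by
  simpa using ((Real.continuous_sqrt.tendsto 0).comp hlim).const_mul (-2)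

theorem integrableOn_Ioi_div_sqrt_of_hasDerivAt (hG : ∀ x ∈ Ici l, HasDerivAt G (-f x) x)
    (hpos : ∀ x ∈ Ici l, 0 < G x) (hf : ∀ x ∈ Ioi l, 0 ≤ f x)
    (hlim : Tendsto G atTop (𝓝 0)) : IntegrableOn (fun x => f x / √(G x)) (Ioi l) :=
  integrableOn_Ioi_deriv_of_nonneg'
    (fun x hx => hasDerivAt_neg_two_mul_sqrt (hG x hx) (hpos x hx))
    (fun x hx => div_nonneg (hf x hx) (Real.sqrt_nonneg _)) (tendsto_neg_two_mul_sqrt hlim)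

theorem integral_Ioi_div_sqrt_of_hasDerivAt (hG : ∀ x ∈ Ici l, HasDerivAt G (-f x) x)
    (hpos : ∀ x ∈ Ici l, 0 < G x) (hf : ∀ x ∈ Ioi l, 0 ≤ f x)
    (hlim : Tendsto G atTop (𝓝 0)) : ∫ x in Ioi l, f x / √(G x) = 2 * √(G l) := by
  rw [integral_Ioi_of_hasDerivAt_of_tendsto'
    (fun x hx => hasDerivAt_neg_two_mul_sqrt (hG x hx) (hpos x hx))
    (integrableOn_Ioi_div_sqrt_of_hasDerivAt hG hpos hf hlim) (tendsto_neg_two_mul_sqrt hlim)]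
  ring

theorem integrableOn_Ioi_mul_sqrt_of_mul_le (hG : ∀ x ∈ Ici l, HasDerivAt G (-f x) x)
    (hpos : ∀ x ∈ Ici l, 0 < G x) (hf : ∀ x ∈ Ioi l, 0 ≤ f x) (hlim : Tendsto G atTop (𝓝 0))
    (hmeas : AEStronglyMeasurable (fun x => f x * √(φ x)) (volume.restrict (Ioi l)))
    (hbound : ∀ x ∈ Ioi l, φ x * G x ≤ δ) :
    IntegrableOn (fun x => f x * √(φ x)) (Ioi l) :=
  ((integrableOn_Ioi_div_sqrt_of_hasDerivAt hG hpos hf hlim).const_mul √δ).mono' hmeas <|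
    ae_restrict_of_forall_mem measurableSet_Ioi fun x hx => by
      rw [Real.norm_of_nonneg (mul_nonneg (hf x hx) (Real.sqrt_nonneg _))]
      exact Real.mul_sqrt_le_sqrt_mul_div_sqrt (hf x hx) (hpos x (Ioi_subset_Ici_self hx))
        (hbound x hx)

theorem integral_Ioi_mul_sqrt_le_of_mul_le (hG : ∀ x ∈ Ici l, HasDerivAt G (-f x) x)
    (hpos : ∀ x ∈ Ici l, 0 < G x) (hf : ∀ x ∈ Ioi l, 0 ≤ f x) (hlim : Tendsto G atTop (𝓝 0))
    (hbound : ∀ x ∈ Ioi l, φ x * G x ≤ δ) :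
    ∫ x in Ioi l, f x * √(φ x) ≤ 2 * √δ * √(G l) := calc
  ∫ x in Ioi l, f x * √(φ x) ≤ ∫ x in Ioi l, √δ * (f x / √(G x)) :=
    integral_mono_of_nonneg
      (ae_restrict_of_forall_mem measurableSet_Ioi fun x hx =>
        mul_nonneg (hf x hx) (Real.sqrt_nonneg _))
      ((integrableOn_Ioi_div_sqrt_of_hasDerivAt hG hpos hf hlim).const_mul √δ)
      (ae_restrict_of_forall_mem measurableSet_Ioi fun x hx =>
        Real.mul_sqrt_le_sqrt_mul_div_sqrt (hf x hx) (hpos x (Ioi_subset_Ici_self hx))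
          (hbound x hx))
  _ = 2 * √δ * √(G l) := by
    rw [integral_const_mul, integral_Ioi_div_sqrt_of_hasDerivAt hG hpos hf hlim]
    ring

end SqrtTail

/-- Integration-by-parts estimate in the proof of the final Corollary of
Section 3.3: with `φ(t) = ∫_r^t exp(-C(l)) dl`, `G(t) = ∫_t^∞ exp(C(s)) ds`
finite, and `δ = sup_{t ≥ r} φ(t)·G(t)` finite, for every `l > r` the integral
`∫_l^∞ exp(C(s))·√(φ(s)) ds` is finite and bounded by `2δ/√(φ(l))`. -/
theorem stmt15 (r : ℝ) (C : ℝ → ℝ) (hC : ContinuousOn C (Set.Ici r))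
    (hG : ∀ t : ℝ, r ≤ t → IntegrableOn (fun s => Real.exp (C s)) (Set.Ici t) volume)
    (δ : ℝ)
    (hbdd : BddAbove (Set.range fun t : {t : ℝ // r ≤ t} =>
      (∫ l in r..(t : ℝ), Real.exp (-C l)) * ∫ s in Set.Ici (t : ℝ), Real.exp (C s)))
    (hδ : δ = ⨆ t : {t : ℝ // r ≤ t},
      (∫ l in r..(t : ℝ), Real.exp (-C l)) * ∫ s in Set.Ici (t : ℝ), Real.exp (C s)) :
    ∀ l : ℝ, r < l →
      IntegrableOn
        (fun s => Real.exp (C s) * Real.sqrt (∫ u in r..s, Real.exp (-C u)))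
        (Set.Ici l) volume ∧
      (∫ s in Set.Ici l, Real.exp (C s) * Real.sqrt (∫ u in r..s, Real.exp (-C u)))
        ≤ 2 * δ / Real.sqrt (∫ u in r..l, Real.exp (-C u)) := by
  intro l hl
  set φ : ℝ → ℝ := fun s => ∫ u in r..s, Real.exp (-C u)
  set G : ℝ → ℝ := fun t => ∫ s in Ioi t, Real.exp (C s)
  have hsup : ∀ s, r ≤ s → φ s * G s ≤ δ := fun s hs => by
    have := le_ciSup hbdd ⟨s, hs⟩
    rwa [← hδ, integral_Ici_eq_integral_Ioi] at this
  have hexpC : ContinuousOn (fun s => Real.exp (C s)) (Ici r) :=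
    Real.continuous_exp.comp_continuousOn hC
  have hexpNegC : ContinuousOn (fun s => Real.exp (-C s)) (Ici r) :=
    Real.continuous_exp.comp_continuousOn hC.neg
  have hGpos : ∀ t ∈ Ici l, 0 < G t := fun t ht =>
    have : NeZero (volume.restrict (Ioi t)) := ⟨by simp⟩
    integral_exp_pos ((hG t (hl.le.trans ht)).mono_set Ioi_subset_Ici_self)
  have hGderiv : ∀ x ∈ Ici l, HasDerivAt G (-Real.exp (C x)) x := fun x hx =>
    hasDerivAt_integral_Ioi ((hG r le_rfl).mono_set Ioi_subset_Ici_self) (hl.trans_le hx)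
      (hexpC.continuousAt (Ici_mem_nhds (hl.trans_le hx)))
  have hGlim : Tendsto G atTop (𝓝 0) := tendsto_integral_Ioi_zero tendsto_id
  have hexp : ∀ x ∈ Ioi l, 0 ≤ Real.exp (C x) := fun x _ => (Real.exp_pos _).le
  have hbound : ∀ x ∈ Ioi l, φ x * G x ≤ δ := fun x hx => hsup x (hl.trans hx).le
  have hmeas :
      AEStronglyMeasurable (fun s => Real.exp (C s) * √(φ s)) (volume.restrict (Ioi l)) :=
    ((hexpC.mul (Real.continuous_sqrt.comp_continuousOn hexpNegC.continuousOn_primitive_Ici)).mono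
      (Ioi_subset_Ici_self.trans (Ici_subset_Ici.2 hl.le))).aestronglyMeasurable measurableSet_Ioi
  have hφl : 0 < φ l := intervalIntegral.intervalIntegral_pos_of_pos_on
    ((hexpNegC.mono Icc_subset_Ici_self).intervalIntegrable_of_Icc hl.le)
    (fun x _ => Real.exp_pos _) hl
  have hδ0 : 0 ≤ δ := by simpa [φ] using hsup r le_rfl
  rw [integrableOn_Ici_iff_integrableOn_Ioi, integral_Ici_eq_integral_Ioi]
  refine ⟨integrableOn_Ioi_mul_sqrt_of_mul_le hGderiv hGpos hexp hGlim hmeas hbound,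
    (integral_Ioi_mul_sqrt_le_of_mul_le hGderiv hGpos hexp hGlim hbound).trans ?_⟩
  calc 2 * √δ * √(G l) ≤ 2 * √δ * (√δ / √(φ l)) := by
        gcongr
        exact Real.sqrt_le_sqrt_div_sqrt_of_mul_le hφl (by linarith [hsup l hl.le])
    _ = 2 * δ / √(φ l) := by
        rw [mul_assoc, ← mul_div_assoc, Real.mul_self_sqrt hδ0, ← mul_div_assoc]
end

section
/- Let r ∈ ℝ and let C : [r,∞) → ℝ be continuous. Define φ(t) = ∫_r^t exp(−C(l)) dl, assume ∫_t^∞ exp(C(s)) ds < ∞ for every t ≥ r, and set δ := sup_{t ≥ r} φ(t)·∫_t^∞ exp(C(s)) ds, assumed finite. Then for every t > r, ∫_r^t exp(−C(l)) · (∫_l^∞ exp(C(s))·√(φ(s)) ds) dl ≤ 4δ·√(φ(t)). -/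
open MeasureTheory Set Filter Topology

/-! With `φ(s) = ∫_r^s e^{-C}` and `G(s) = ∫_s^∞ e^{C}`, the bound `φ G ≤ δ` gives
`e^{C} √φ ≤ √δ · e^{C} / √G`, and `e^{C} / √G = (-2 √G)'` integrates over `(l, ∞)` to
`2 √G(l) ≤ 2 √δ / √φ(l)`. The outer integrand is therefore at most `2δ φ' / √φ = (4δ √φ)'`,
which integrates over `(r, t)` to `4δ √φ(t)` although it is singular at `r`. -/

theorem hasDerivAt_integral_Ioi_s16 {E : Type*} [NormedAddCommGroup E] [NormedSpace ℝ E]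
    [CompleteSpace E] {f : ℝ → E} {a x : ℝ} (hint : IntegrableOn f (Ioi a))
    (hcont : ContinuousOn f (Ioi a)) (hx : a < x) :
    HasDerivAt (fun y => ∫ s in Ioi y, f s) (-f x) x := by
  have hprim : HasDerivAt (fun y => ∫ s in a..y, f s) (f x) x :=
    intervalIntegral.integral_hasDerivAt_right
      ((intervalIntegrable_iff_integrableOn_Ioc_of_le hx.le).2
        (hint.mono_set Ioc_subset_Ioi_self))
      (hcont.stronglyMeasurableAtFilter isOpen_Ioi x hx) (hcont.continuousAt (Ioi_mem_nhds hx))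
  refine ((hprim.const_sub (∫ s in Ioi a, f s)).congr_of_eventuallyEq ?_)
  filter_upwards [Ioi_mem_nhds hx] with y hy
  rw [← intervalIntegral.integral_Ioi_sub_Ioi hint (le_of_lt hy), sub_sub_cancel]

theorem integral_Ioi_pos {g : ℝ → ℝ} {a x : ℝ} (hint : IntegrableOn g (Ioi a))
    (hpos : ∀ y ∈ Ioi a, 0 < g y) (hx : a ≤ x) : 0 < ∫ y in Ioi x, g y := by
  have hsub : Ioi x ⊆ Ioi a := Ioi_subset_Ioi hx
  rw [setIntegral_pos_iff_support_of_nonneg_ae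
    (ae_restrict_of_forall_mem measurableSet_Ioi fun y hy => (hpos y (hsub hy)).le)
    (hint.mono_set hsub),
    inter_eq_right.2 fun y hy => Function.mem_support.2 (hpos y (hsub hy)).ne', Real.volume_Ioi]
  exact ENNReal.zero_lt_top

theorem integral_Ioi_div_sqrt_integral_Ioi {g : ℝ → ℝ} {a : ℝ} (hint : IntegrableOn g (Ioi a))
    (hcont : ContinuousOn g (Ioi a)) (hpos : ∀ x ∈ Ioi a, 0 < g x) :
    ∫ x in Ioi a, g x / √(∫ s in Ioi x, g s) = 2 * √(∫ s in Ioi a, g s) := by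
  set G : ℝ → ℝ := fun x => ∫ s in Ioi x, g s
  have hG_pos : ∀ x ∈ Ioi a, 0 < G x := fun x hx => integral_Ioi_pos hint hpos (le_of_lt hx)
  have hderiv : ∀ x ∈ Ioi a, HasDerivAt (fun y => -2 * √(G y)) (g x / √(G x)) x := by
    intro x hx
    refine (((hasDerivAt_integral_Ioi_s16 hint hcont hx).sqrt (hG_pos x hx).ne').const_mul
      (-2)).congr_deriv ?_
    show -2 * (-g x / (2 * √(G x))) = g x / √(G x)
    have := (Real.sqrt_pos.2 (hG_pos x hx)).ne'
    field_simp
  have hlim : Tendsto (fun y => -2 * √(G y)) atTop (𝓝 (-2 * √0)) :=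
    ((tendsto_integral_Ioi_zero tendsto_id).sqrt).const_mul _
  rw [integral_Ioi_of_hasDerivAt_of_nonneg
    ((hint.continuousWithinAt_Ici_primitive_Ioi.sqrt).const_mul _) hderiv
    (fun x hx => div_nonneg (hpos x hx).le (Real.sqrt_nonneg _)) hlim]
  simp

theorem integral_div_sqrt_primitive {f : ℝ → ℝ} {a b : ℝ} (hab : a ≤ b)
    (hcont : ContinuousOn f (Icc a b)) (hpos : ∀ x ∈ Ioo a b, 0 < f x) :
    ∫ x in a..b, f x / √(∫ y in a..x, f y) = 2 * √(∫ y in a..b, f y) := by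
  set φ : ℝ → ℝ := fun x => ∫ y in a..x, f y
  have hint : ∀ x ∈ Icc a b, IntervalIntegrable f volume a x := fun x hx =>
    (hcont.mono (Icc_subset_Icc_right hx.2)).intervalIntegrable_of_Icc hx.1
  have hφ_pos : ∀ x ∈ Ioo a b, 0 < φ x := fun x hx =>
    intervalIntegral.intervalIntegral_pos_of_pos_on (hint x (Ioo_subset_Icc_self hx))
      (fun y hy => hpos y ⟨hy.1, hy.2.trans hx.2⟩) hx.1
  have hφ_cont : ContinuousOn (fun x => 2 * √(φ x)) (Icc a b) := by
    have := intervalIntegral.continuousOn_primitive_interval' (hint b (right_mem_Icc.2 hab))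
      left_mem_uIcc
    rw [uIcc_of_le hab] at this
    exact continuousOn_const.mul this.sqrt
  have hderiv : ∀ x ∈ Ioo a b, HasDerivAt (fun y => 2 * √(φ y)) (f x / √(φ x)) x := by
    intro x hx
    have hφ : HasDerivAt φ (f x) x :=
      intervalIntegral.integral_hasDerivAt_right (hint x (Ioo_subset_Icc_self hx))
        ((hcont.mono Ioo_subset_Icc_self).stronglyMeasurableAtFilter isOpen_Ioo x hx)
        (hcont.continuousAt (Icc_mem_nhds hx.1 hx.2))
    refine ((hφ.sqrt (hφ_pos x hx).ne').const_mul 2).congr_deriv ?_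
    have := (Real.sqrt_pos.2 (hφ_pos x hx)).ne'
    field_simp
  have hderiv_int : IntervalIntegrable (fun x => f x / √(φ x)) volume a b :=
    (intervalIntegrable_iff_integrableOn_Ioc_of_le hab).2 <|
      intervalIntegral.integrableOn_deriv_of_nonneg hφ_cont hderiv fun x hx =>
        div_nonneg (hpos x hx).le (Real.sqrt_nonneg _)
  rw [intervalIntegral.integral_eq_sub_of_hasDerivAt_of_le hab hφ_cont hderiv hderiv_int]
  simp [φ]

theorem integral_Ioi_mul_sqrt_le {g φ : ℝ → ℝ} {a δ : ℝ} (hint : IntegrableOn g (Ioi a))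
    (hcont : ContinuousOn g (Ioi a)) (hpos : ∀ x ∈ Ioi a, 0 < g x)
    (hδ : ∀ x ∈ Ioi a, φ x * ∫ s in Ioi x, g s ≤ δ) :
    ∫ x in Ioi a, g x * √(φ x) ≤ 2 * √δ * √(∫ s in Ioi a, g s) := by
  set G : ℝ → ℝ := fun x => ∫ s in Ioi x, g s
  have hI := integral_Ioi_div_sqrt_integral_Ioi hint hcont hpos
  have hψ_int : IntegrableOn (fun x => g x / √(G x)) (Ioi a) := by
    refine Integrable.of_integral_ne_zero ?_
    rw [hI]
    exact (mul_pos two_pos (Real.sqrt_pos.2 (integral_Ioi_pos hint hpos le_rfl))).ne'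
  have hpointwise : ∀ x ∈ Ioi a, g x * √(φ x) ≤ √δ * (g x / √(G x)) := by
    intro x hx
    have hGx : 0 < G x := integral_Ioi_pos hint hpos (le_of_lt hx)
    have hsq : √(φ x) * √(G x) ≤ √δ :=
      (Real.sqrt_mul' _ hGx.le).symm.trans_le (Real.sqrt_le_sqrt (hδ x hx))
    rw [mul_div_assoc', le_div_iff₀ (Real.sqrt_pos.2 hGx)]
    linarith [mul_le_mul_of_nonneg_left hsq (hpos x hx).le]
  calc ∫ x in Ioi a, g x * √(φ x) ≤ ∫ x in Ioi a, √δ * (g x / √(G x)) :=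
        integral_mono_of_nonneg
          (ae_restrict_of_forall_mem measurableSet_Ioi fun x hx =>
            mul_nonneg (hpos x hx).le (Real.sqrt_nonneg _))
          (hψ_int.const_mul _) (ae_restrict_of_forall_mem measurableSet_Ioi hpointwise)
    _ = 2 * √δ * √(G a) := by rw [integral_const_mul, hI]; ring

theorem integral_mul_integral_Ioi_mul_sqrt_le {E g : ℝ → ℝ} {r t δ : ℝ} (hrt : r ≤ t)
    (hE : ContinuousOn E (Icc r t)) (hE_pos : ∀ x ∈ Ioc r t, 0 < E x)
    (hg_int : IntegrableOn g (Ioi r)) (hg : ContinuousOn g (Ioi r))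
    (hg_pos : ∀ x ∈ Ioi r, 0 < g x)
    (hδ : ∀ x ∈ Ioi r, (∫ u in r..x, E u) * ∫ s in Ioi x, g s ≤ δ) :
    ∫ l in r..t, E l * ∫ s in Ioi l, g s * √(∫ u in r..s, E u)
      ≤ 4 * δ * √(∫ u in r..t, E u) := by
  rcases hrt.eq_or_lt with rfl | hrt
  · simp
  set φ : ℝ → ℝ := fun x => ∫ u in r..x, E u
  have hφ_pos : ∀ x ∈ Ioc r t, 0 < φ x := fun x hx =>
    intervalIntegral.intervalIntegral_pos_of_pos_on
      ((hE.mono (Icc_subset_Icc_right hx.2)).intervalIntegrable_of_Icc hx.1.le)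
      (fun y hy => hE_pos y ⟨hy.1, hy.2.le.trans hx.2⟩) hx.1
  have hδ_nonneg : 0 ≤ δ :=
    (mul_pos (hφ_pos t ⟨hrt, le_rfl⟩) (integral_Ioi_pos hg_int hg_pos hrt.le)).le.trans
      (hδ t hrt)
  have hinner : ∀ l ∈ Ioc r t, ∫ s in Ioi l, g s * √(φ s) ≤ 2 * δ / √(φ l) := by
    intro l hl
    have hsq : √(φ l) * √(∫ s in Ioi l, g s) ≤ √δ :=
      (Real.sqrt_mul' _ (integral_Ioi_pos hg_int hg_pos hl.1.le).le).symm.trans_le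
        (Real.sqrt_le_sqrt (hδ l hl.1))
    calc ∫ s in Ioi l, g s * √(φ s) ≤ 2 * √δ * √(∫ s in Ioi l, g s) :=
          integral_Ioi_mul_sqrt_le (hg_int.mono_set (Ioi_subset_Ioi hl.1.le))
            (hg.mono (Ioi_subset_Ioi hl.1.le)) (fun x hx => hg_pos x (hl.1.trans hx))
            (fun x hx => hδ x (hl.1.trans hx))
      _ ≤ 2 * δ / √(φ l) := by
          rw [le_div_iff₀ (Real.sqrt_pos.2 (hφ_pos l hl))]
          linarith [mul_le_mul_of_nonneg_left hsq (Real.sqrt_nonneg δ),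
            Real.mul_self_sqrt hδ_nonneg]
  have hhead := integral_div_sqrt_primitive hrt.le hE fun x hx => hE_pos x (Ioo_subset_Ioc_self hx)
  have hhead_int : IntervalIntegrable (fun x => E x / √(φ x)) volume r t := by
    refine intervalIntegral.intervalIntegrable_of_integral_ne_zero ?_
    rw [hhead]
    exact (mul_pos two_pos (Real.sqrt_pos.2 (hφ_pos t ⟨hrt, le_rfl⟩))).ne'
  rw [intervalIntegral.integral_of_le hrt.le]
  calc ∫ l in Ioc r t, E l * ∫ s in Ioi l, g s * √(φ s)
        ≤ ∫ l in Ioc r t, 2 * δ * (E l / √(φ l)) :=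
        integral_mono_of_nonneg
          (ae_restrict_of_forall_mem measurableSet_Ioc fun l hl =>
            mul_nonneg (hE_pos l hl).le <| setIntegral_nonneg measurableSet_Ioi fun s hs =>
              mul_nonneg (hg_pos s (hl.1.trans hs)).le (Real.sqrt_nonneg _))
          (hhead_int.1.const_mul _)
          (ae_restrict_of_forall_mem measurableSet_Ioc fun l hl =>
            (mul_le_mul_of_nonneg_left (hinner l hl) (hE_pos l hl).le).trans_eq (by ring))
    _ = 4 * δ * √(φ t) := by
        rw [integral_const_mul, ← intervalIntegral.integral_of_le hrt.le, hhead]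
        ring

/-- Combined Hardy-type estimate in the proof of the final Corollary of
Section 3.3: with `φ(t) = ∫_r^t exp(-C(l)) dl`, `G(t) = ∫_t^∞ exp(C(s)) ds`
finite, and `δ = sup_{t ≥ r} φ(t)·G(t)` finite, for every `t > r`,
`∫_r^t exp(-C(l)) (∫_l^∞ exp(C(s))√(φ(s)) ds) dl ≤ 4δ√(φ(t))`. -/
theorem stmt16 (r : ℝ) (C : ℝ → ℝ) (hC : ContinuousOn C (Set.Ici r))
    (hG : ∀ t : ℝ, r ≤ t → IntegrableOn (fun s => Real.exp (C s)) (Set.Ici t) volume)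
    (δ : ℝ)
    (hbdd : BddAbove (Set.range fun t : {t : ℝ // r ≤ t} =>
      (∫ l in r..(t : ℝ), Real.exp (-C l)) * ∫ s in Set.Ici (t : ℝ), Real.exp (C s)))
    (hδ : δ = ⨆ t : {t : ℝ // r ≤ t},
      (∫ l in r..(t : ℝ), Real.exp (-C l)) * ∫ s in Set.Ici (t : ℝ), Real.exp (C s)) :
    ∀ t : ℝ, r < t →
      (∫ l in r..t, Real.exp (-C l) *
          ∫ s in Set.Ici l, Real.exp (C s) * Real.sqrt (∫ u in r..s, Real.exp (-C u)))
        ≤ 4 * δ * Real.sqrt (∫ u in r..t, Real.exp (-C u)) := by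
  intro t ht
  have hδ_ge : ∀ x ∈ Ioi r,
      (∫ u in r..x, Real.exp (-C u)) * ∫ s in Ioi x, Real.exp (C s) ≤ δ := fun x hx => by
    rw [hδ, ← integral_Ici_eq_integral_Ioi]
    exact le_ciSup hbdd ⟨x, le_of_lt hx⟩
  simp only [integral_Ici_eq_integral_Ioi]
  exact integral_mul_integral_Ioi_mul_sqrt_le ht.le
    (hC.mono Icc_subset_Ici_self).neg.rexp (fun _ _ => Real.exp_pos _)
    ((hG r le_rfl).mono_set Ioi_subset_Ici_self) (hC.mono Ioi_subset_Ici_self).rexp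
    (fun _ _ => Real.exp_pos _) hδ_ge
end
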